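/- For one-dimensional probability measures μ₁,…,μ_N with finite second moments, the measure μ whose quantile function is F_μ⁻¹ = (1/N) Σ_{i=1}^N F_{μ_i}⁻¹ minimizes ν ↦ Σ_{i=1}^N W₂²(ν, μ_i) over all probability measures ν with finite second moment (i.e., it is the 2-Wasserstein barycenter). -/

import Mathlib

/-!
The quantile function of a probability measure `μ` pushes Lebesgue measure on `(0,1)` forward
to `μ`, so finite second moments put all quantile functions in `L²(0,1)`. Pointwise in `t`, the
mean of the numbers `F_{μ_i}⁻¹(t)` minimizes `c ↦ ∑ i, (c - F_{μ_i}⁻¹(t))²`; integrating over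
`t ∈ (0,1)` gives the claim.
-/

open MeasureTheory ProbabilityTheory Real Set
open Filter Topology
open scoped ENNReal NNReal

noncomputable section

/-- Quantile (generalized inverse CDF) of a measure on `ℝ`. -/
def quantile (μ : Measure ℝ) (t : ℝ) : ℝ :=
  sInf {x : ℝ | ENNReal.ofReal t ≤ μ (Set.Iic x)}

/-- Squared 2-Wasserstein distance on `ℝ`, via the 1D quantile-function formula. -/
def W2sq (μ ν : Measure ℝ) : ℝ :=
  ∫ t in Set.Ioo (0:ℝ) 1, (quantile μ t - quantile ν t)^2

/-- Empirical measure of `n` real points. -/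
def empMeasure {n : ℕ} (X : Fin n → ℝ) : Measure ℝ :=
  ((n : ℝ≥0∞))⁻¹ • ∑ i, Measure.dirac (X i)

/-- `k`-th order statistic (`k : Fin n`, so `ordStat X k` is the `(k+1)`-th smallest). -/
def ordStat {n : ℕ} (X : Fin n → ℝ) (k : Fin n) : ℝ :=
  quantile (empMeasure X) (((k : ℕ) + 1 : ℝ) / n)

/-- Continuous uniform distribution on the interval `(a, b]`. -/
def unif (a b : ℝ) : Measure ℝ :=
  (ENNReal.ofReal (b - a))⁻¹ • volume.restrict (Set.Ioc a b)

lemma sum_sq_sub_mean_le {ι : Type*} [Fintype ι] (x : ι → ℝ) (c : ℝ) :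
    ∑ i, ((Fintype.card ι : ℝ)⁻¹ * ∑ j, x j - x i) ^ 2 ≤ ∑ i, (c - x i) ^ 2 := by
  set n : ℝ := (Fintype.card ι : ℝ)
  set b := n⁻¹ * ∑ j, x j
  have hmean : n * b = ∑ j, x j := by
    rcases eq_or_ne (Fintype.card ι) 0 with h | h
    · have := Fintype.card_eq_zero_iff.1 h
      simp [b]
    · rw [← mul_assoc, mul_inv_cancel₀ (Nat.cast_ne_zero.2 h), one_mul]
  have hsplit : ∑ i, (c - x i) ^ 2 = ∑ i, (b - x i) ^ 2 + n * (c - b) ^ 2 := by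
    have : ∀ i, (c - x i) ^ 2 = (b - x i) ^ 2 + ((c - b) ^ 2 + 2 * (c - b) * (b - x i)) :=
      fun i => by ring
    simp only [this, Finset.sum_add_distrib, ← Finset.mul_sum, Finset.sum_sub_distrib,
      Finset.sum_const, Finset.card_univ, nsmul_eq_mul]
    linear_combination (2 * (c - b)) * hmean
  rw [hsplit]
  exact le_add_of_nonneg_right (by positivity)

theorem sum_integral_sq_sub_mean_le {α ι : Type*} [MeasurableSpace α] [Fintype ι]
    {ρ : Measure α} {f : ι → α → ℝ} (hf : ∀ i, MemLp (f i) 2 ρ) {m g : α → ℝ}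
    (hm : ∀ᵐ a ∂ρ, m a = (Fintype.card ι : ℝ)⁻¹ * ∑ i, f i a) (hg : MemLp g 2 ρ) :
    ∑ i, ∫ a, (m a - f i a) ^ 2 ∂ρ ≤ ∑ i, ∫ a, (g a - f i a) ^ 2 ∂ρ := by
  have hmean : MemLp (fun a => (Fintype.card ι : ℝ)⁻¹ * ∑ i, f i a) 2 ρ :=
    (memLp_finsetSum _ fun i _ => hf i).const_mul _
  have hint : ∀ p : α → ℝ, MemLp p 2 ρ → ∀ i, Integrable (fun a => (p a - f i a) ^ 2) ρ :=
    fun p hp i => (hp.sub (hf i)).integrable_sq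
  have hmLp : MemLp m 2 ρ := hmean.ae_eq (hm.mono fun a ha => ha.symm)
  rw [← integral_finsetSum _ fun i _ => hint m hmLp i,
    ← integral_finsetSum _ fun i _ => hint g hg i]
  refine integral_mono_ae (integrable_finsetSum _ fun i _ => hint m hmLp i)
    (integrable_finsetSum _ fun i _ => hint g hg i) (hm.mono fun a ha => ?_)
  simp only [ha]
  exact sum_sq_sub_mean_le (f · a) (g a)

section Quantile

variable {μ : Measure ℝ} [IsProbabilityMeasure μ]

lemma quantile_le_iff_le_cdf {t x : ℝ} (ht₀ : 0 < t) (ht₁ : t < 1) :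
    quantile μ t ≤ x ↔ t ≤ cdf μ x := by
  have hset : {y : ℝ | ENNReal.ofReal t ≤ μ (Iic y)} = {y | t ≤ cdf μ y} := by
    ext y
    show ENNReal.ofReal t ≤ μ (Iic y) ↔ t ≤ cdf μ y
    rw [← ofReal_cdf, ENNReal.ofReal_le_ofReal_iff (cdf_nonneg μ y)]
  have hq : quantile μ t = sInf {y | t ≤ cdf μ y} := by rw [quantile, hset]
  have hne : {y | t ≤ cdf μ y}.Nonempty := ((tendsto_cdf_atTop μ).eventually_const_le ht₁).exists
  have hbdd : BddBelow {y | t ≤ cdf μ y} := by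
    obtain ⟨y₀, hy₀⟩ := ((tendsto_cdf_atBot μ).eventually_lt_const ht₀).exists
    exact ⟨y₀, fun y hy => ((cdf μ).mono.reflect_lt (hy₀.trans_le hy)).le⟩
  rw [hq]
  refine ⟨fun h => ?_, fun h => csInf_le hbdd h⟩
  have hright : ∀ᶠ y in 𝓝[>] x, t ≤ cdf μ y := eventually_nhdsWithin_of_forall fun y hy => by
    obtain ⟨s, hs, hsy⟩ := exists_lt_of_csInf_lt hne (h.trans_lt hy)
    exact hs.trans ((cdf μ).mono hsy.le)
  exact ge_of_tendsto (((cdf μ).right_continuous x).mono Ioi_subset_Ici_self) hright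

lemma monotoneOn_quantile : MonotoneOn (quantile μ) (Ioo 0 1) := fun _ ht _ ht' htt' =>
  (quantile_le_iff_le_cdf ht.1 ht.2).2 <|
    htt'.trans ((quantile_le_iff_le_cdf ht'.1 ht'.2).1 le_rfl)

lemma aemeasurable_quantile : AEMeasurable (quantile μ) (volume.restrict (Ioo 0 1)) :=
  aemeasurable_restrict_of_monotoneOn measurableSet_Ioo monotoneOn_quantile

lemma map_quantile_volume_Ioo : (volume.restrict (Ioo 0 1)).map (quantile μ) = μ := by
  refine Measure.ext_of_Iic _ _ fun x => ?_
  rw [Measure.map_apply_of_aemeasurable aemeasurable_quantile measurableSet_Iic,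
    Measure.restrict_apply' measurableSet_Ioo, ← ofReal_cdf]
  set c := cdf μ x
  have hpre : quantile μ ⁻¹' Iic x ∩ Ioo 0 1 = {t | t ∈ Ioo 0 1 ∧ t ≤ c} := by
    ext t
    exact ⟨fun ⟨h, ht⟩ => ⟨ht, (quantile_le_iff_le_cdf ht.1 ht.2).1 h⟩,
      fun ⟨ht, h⟩ => ⟨(quantile_le_iff_le_cdf ht.1 ht.2).2 h, ht⟩⟩
  have hlower : Ioo 0 c ⊆ {t | t ∈ Ioo 0 1 ∧ t ≤ c} := fun t ht =>
    ⟨⟨ht.1, ht.2.trans_le (cdf_le_one μ x)⟩, ht.2.le⟩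
  have hupper : {t | t ∈ Ioo 0 1 ∧ t ≤ c} ⊆ Ioc 0 c := fun t ht => ⟨ht.1.1, ht.2⟩
  rw [hpre]
  refine le_antisymm ((measure_mono hupper).trans_eq ?_) ((measure_mono hlower).trans_eq' ?_) <;>
    simp

lemma memLp_quantile (h2 : Integrable (fun x => x ^ 2) μ) :
    MemLp (quantile μ) 2 (volume.restrict (Ioo 0 1)) := by
  rw [memLp_two_iff_integrable_sq aemeasurable_quantile.aestronglyMeasurable]
  rw [← map_quantile_volume_Ioo (μ := μ)] at h2
  exact (integrable_map_measure (by fun_prop) aemeasurable_quantile).1 h2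

end Quantile

theorem stmt2_general {N : ℕ} (μ : Fin N → Measure ℝ)
    (hprob : ∀ i, IsProbabilityMeasure (μ i))
    (h2 : ∀ i, Integrable (fun x => x^2) (μ i))
    (μbar : Measure ℝ)
    (hbar : ∀ t ∈ Set.Ioo (0:ℝ) 1, quantile μbar t = (N:ℝ)⁻¹ * ∑ i, quantile (μ i) t) :
    ∀ ν : Measure ℝ, IsProbabilityMeasure ν → Integrable (fun x => x^2) ν →
      ∑ i, W2sq μbar (μ i) ≤ ∑ i, W2sq ν (μ i) := by
  intro ν _ hν2
  have hmean : ∀ᵐ t ∂volume.restrict (Ioo 0 1),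
      quantile μbar t = (Fintype.card (Fin N) : ℝ)⁻¹ * ∑ i, quantile (μ i) t := by
    simpa using ae_restrict_of_forall_mem measurableSet_Ioo hbar
  exact sum_integral_sq_sub_mean_le (fun i => memLp_quantile (h2 i)) hmean (memLp_quantile hν2)

/-- the measure whose quantile function is the average of the quantile
functions minimizes the sum of squared 2-Wasserstein distances. -/
theorem stmt2 {N : ℕ} (hN : 0 < N) (μ : Fin N → Measure ℝ)
    (hprob : ∀ i, IsProbabilityMeasure (μ i))
    (h2 : ∀ i, Integrable (fun x => x^2) (μ i))
    (μbar : Measure ℝ) (hbarprob : IsProbabilityMeasure μbar)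
    (hbar2 : Integrable (fun x => x^2) μbar)
    (hbar : ∀ t ∈ Set.Ioo (0:ℝ) 1, quantile μbar t = (N:ℝ)⁻¹ * ∑ i, quantile (μ i) t) :
    ∀ ν : Measure ℝ, IsProbabilityMeasure ν → Integrable (fun x => x^2) ν →
      ∑ i, W2sq μbar (μ i) ≤ ∑ i, W2sq ν (μ i) :=
  stmt2_general μ hprob h2 μbar hbar
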